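/- arXiv:1812.06542 — 4 statements merged into one kernel-verified Lean document; each statement's English description precedes it below -/
import Mathlib

section
/- Let M > 0, p ≥ 1, and let r(s) be the inverse of s(r) = r + 2M ln(r - 2M). Define h(s) = (1 - 2M/r(s))·r(s)^{1-p}. Then there exists C ≥ 1 such that for all s ≥ 4M + e, C^{-1} s^{1-p} ≤ h(s) ≤ C s^{1-p}. -/
open Real

theorem stmt_4 (M p : ℝ) (hM : 0 < M) (hp : 1 ≤ p) (r : ℝ → ℝ)
    (hr : ∀ s, 2 * M < r s)
    (hinv : ∀ s, r s + 2 * M * Real.log (r s - 2 * M) = s) :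
    ∃ C ≥ (1:ℝ), ∀ s ≥ 4 * M + Real.exp 1,
      C⁻¹ * s ^ (1 - p) ≤ (1 - 2 * M / r s) * (r s) ^ (1 - p) ∧
      (1 - 2 * M / r s) * (r s) ^ (1 - p) ≤ C * s ^ (1 - p) := by
  set K : ℝ := 1 + 2 * M with hKdef
  have hK1 : (1:ℝ) ≤ K := by nlinarith
  have hK0 : (0:ℝ) < K := by linarith
  refine ⟨K ^ p, Real.one_le_rpow hK1 (by linarith), ?_⟩
  intro s hs
  have he : (1:ℝ) < Real.exp 1 := by
    have := Real.exp_one_gt_d9; linarith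
  have hrs := hr s
  have heq := hinv s
  have hx0 : 0 < r s - 2 * M := by linarith
  have hx1 : 1 ≤ r s - 2 * M := by
    by_contra h
    push_neg at h
    have hlt : Real.log (r s - 2 * M) < 0 := Real.log_neg hx0 h
    nlinarith
  have hlog0 : 0 ≤ Real.log (r s - 2 * M) := Real.log_nonneg hx1
  have hrle : r s ≤ s := by nlinarith
  have hlogle : Real.log (r s - 2 * M) ≤ r s - 2 * M - 1 :=
    Real.log_le_sub_one_of_pos hx0
  have hsleK : s ≤ K * r s := by nlinarith
  have hs0 : 0 < s := by
    have := Real.exp_pos 1; linarith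
  have hr0 : 0 < r s := by linarith
  have hq : 1 - p ≤ 0 := by linarith
  -- rpow comparisons
  have h1 : s ^ (1 - p) ≤ (r s) ^ (1 - p) :=
    Real.rpow_le_rpow_of_nonpos hr0 hrle hq
  have hdiv : s / K ≤ r s := by
    rw [div_le_iff₀ hK0]; linarith [hsleK]
  have h2 : (r s) ^ (1 - p) ≤ (s / K) ^ (1 - p) :=
    Real.rpow_le_rpow_of_nonpos (by positivity) hdiv hq
  have hrw : (s / K) ^ (1 - p) = K ^ (p - 1) * s ^ (1 - p) := by
    rw [Real.div_rpow hs0.le hK0.le, div_eq_mul_inv, ← Real.rpow_neg hK0.le]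
    ring_nf
  -- bounds on F = 1 - 2M / r s
  have hF1 : 1 - 2 * M / r s ≤ 1 := by
    have : 0 ≤ 2 * M / r s := by positivity
    linarith
  have hFeq : 1 - 2 * M / r s = (r s - 2 * M) / r s := by
    field_simp
  have hF2 : K⁻¹ ≤ 1 - 2 * M / r s := by
    rw [hFeq, le_div_iff₀ hr0, inv_mul_eq_div, div_le_iff₀ hK0]
    nlinarith
  have hF0 : 0 ≤ 1 - 2 * M / r s := le_trans (by positivity) hF2
  have hsq0 : 0 ≤ s ^ (1 - p) := Real.rpow_nonneg hs0.le _
  have hrq0 : 0 ≤ (r s) ^ (1 - p) := Real.rpow_nonneg hr0.le _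
  have hKp : K ≤ K ^ p := by
    calc K = K ^ (1:ℝ) := (Real.rpow_one K).symm
    _ ≤ K ^ p := Real.rpow_le_rpow_of_exponent_le hK1 hp
  have hKp1 : K ^ (p - 1) ≤ K ^ p :=
    Real.rpow_le_rpow_of_exponent_le hK1 (by linarith)
  constructor
  · have hCinv : (K ^ p)⁻¹ ≤ K⁻¹ := by
      apply inv_anti₀ hK0 hKp
    calc (K ^ p)⁻¹ * s ^ (1 - p) ≤ K⁻¹ * s ^ (1 - p) := by
          apply mul_le_mul_of_nonneg_right hCinv hsq0
    _ ≤ (1 - 2 * M / r s) * (r s) ^ (1 - p) := by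
          apply mul_le_mul hF2 h1 hsq0 hF0
  · calc (1 - 2 * M / r s) * (r s) ^ (1 - p) ≤ 1 * (r s) ^ (1 - p) := by
          apply mul_le_mul_of_nonneg_right hF1 hrq0
    _ = (r s) ^ (1 - p) := one_mul _
    _ ≤ (s / K) ^ (1 - p) := h2
    _ = K ^ (p - 1) * s ^ (1 - p) := hrw
    _ ≤ K ^ p * s ^ (1 - p) := by
          apply mul_le_mul_of_nonneg_right hKp1 hsq0
end

section
/- Let M > 0, p ≥ 1, and let r(s) be the inverse of s(r) = r + 2M ln(r - 2M). Define h(s) = (1 - 2M/r(s))·r(s)^{1-p}. Then there exists C ≥ 1 such that for all s ≤ 4M + e, C^{-1} e^{s/(2M)} ≤ h(s) ≤ C e^{s/(2M)}. -/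
open Real

theorem stmt_5 (M p : ℝ) (hM : 0 < M) (hp : 1 ≤ p) (r : ℝ → ℝ)
    (hr : ∀ s, 2 * M < r s)
    (hinv : ∀ s, r s + 2 * M * Real.log (r s - 2 * M) = s) :
    ∃ C ≥ (1:ℝ), ∀ s ≤ 4 * M + Real.exp 1,
      C⁻¹ * Real.exp (s / (2 * M)) ≤ (1 - 2 * M / r s) * (r s) ^ (1 - p) ∧
      (1 - 2 * M / r s) * (r s) ^ (1 - p) ≤ C * Real.exp (s / (2 * M)) := by
  have hM2 : (0:ℝ) < 2 * M := by linarith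
  set b : ℝ := 2 * M + Real.exp 1 with hbdef
  have he : (1:ℝ) < Real.exp 1 := by
    have := Real.add_one_lt_exp (x := 1) one_ne_zero
    linarith
  have hb1 : (1:ℝ) < b := by simp only [hbdef]; linarith
  set C : ℝ := max ((2*M) ^ (-p)) (Real.exp (b/(2*M)) * b ^ p) with hCdef
  have hC2pos : 0 < Real.exp (b/(2*M)) * b ^ p := by positivity
  have hC2 : 1 ≤ Real.exp (b/(2*M)) * b ^ p := by
    have h1 : 1 ≤ Real.exp (b/(2*M)) := Real.one_le_exp (by positivity)
    have h2 : 1 ≤ b ^ p := Real.one_le_rpow hb1.le (by linarith)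
    nlinarith
  have hC1 : (1:ℝ) ≤ C := le_trans hC2 (le_max_right _ _)
  have hCpos : 0 < C := lt_of_lt_of_le one_pos hC1
  refine ⟨C, hC1, fun s hs => ?_⟩
  have hrs := hr s
  have hrpos : 0 < r s := by linarith
  have hd : 0 < r s - 2*M := by linarith
  have hlog : Real.log (r s - 2*M) = (s - r s)/(2*M) := by
    field_simp
    linarith [hinv s]
  have hexp : r s - 2*M = Real.exp ((s - r s)/(2*M)) := by
    rw [← hlog, Real.exp_log hd]
  have hle : r s ≤ b := by
    by_contra h
    push_neg at h
    have h1 : Real.exp 1 < r s - 2*M := by simp only [hbdef] at h; linarith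
    have h2 : 1 < Real.log (r s - 2*M) := by
      calc 1 = Real.log (Real.exp 1) := (Real.log_exp 1).symm
        _ < Real.log (r s - 2*M) := Real.log_lt_log (Real.exp_pos 1) h1
    have := hinv s
    simp only [hbdef] at h
    nlinarith
  have hval : (1 - 2*M / r s) * (r s) ^ (1-p)
      = Real.exp (s/(2*M)) * (Real.exp (-(r s)/(2*M)) * (r s) ^ (-p)) := by
    have h1 : (1 - 2*M/r s) = (r s - 2*M)/r s := by field_simp
    have h2 : (r s) ^ (1-p) = r s * (r s) ^ (-p) := by
      rw [sub_eq_add_neg, Real.rpow_add hrpos, Real.rpow_one]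
    rw [h1, h2, hexp,
      show (s - r s)/(2*M) = s/(2*M) + (-(r s)/(2*M)) by ring, Real.exp_add]
    field_simp
  have hppos : (0:ℝ) ≤ p := by linarith
  have hrpow_pos : 0 < (r s) ^ (-p) := Real.rpow_pos_of_pos hrpos _
  have hpow_up : (r s) ^ (-p) ≤ (2*M) ^ (-p) := by
    rw [Real.rpow_neg hrpos.le, Real.rpow_neg hM2.le]
    exact inv_anti₀ (Real.rpow_pos_of_pos hM2 p)
      (Real.rpow_le_rpow hM2.le hrs.le hppos)
  have hpow_lo : b ^ (-p) ≤ (r s) ^ (-p) := by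
    rw [Real.rpow_neg hrpos.le, Real.rpow_neg (by linarith : (0:ℝ) ≤ b)]
    exact inv_anti₀ (Real.rpow_pos_of_pos hrpos p)
      (Real.rpow_le_rpow hrpos.le hle hppos)
  have hexp_up : Real.exp (-(r s)/(2*M)) ≤ 1 :=
    Real.exp_le_one_iff.mpr (div_nonpos_of_nonpos_of_nonneg (by linarith) hM2.le)
  have hexp_lo : Real.exp (-b/(2*M)) ≤ Real.exp (-(r s)/(2*M)) :=
    Real.exp_le_exp.mpr (by gcongr <;> linarith)
  have hE : 0 < Real.exp (s/(2*M)) := Real.exp_pos _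
  rw [hval]
  constructor
  · have hmid : C⁻¹ ≤ Real.exp (-(r s)/(2*M)) * (r s) ^ (-p) := by
      have h3 : Real.exp (-b/(2*M)) * b ^ (-p)
          = (Real.exp (b/(2*M)) * b ^ p)⁻¹ := by
        rw [Real.rpow_neg (by linarith : (0:ℝ) ≤ b), mul_inv, ← Real.exp_neg,
          show -(b/(2*M)) = -b/(2*M) by ring]
      have h4 : C⁻¹ ≤ (Real.exp (b/(2*M)) * b ^ p)⁻¹ :=
        inv_anti₀ hC2pos (le_max_right _ _)
      calc C⁻¹ ≤ Real.exp (-b/(2*M)) * b ^ (-p) := by rw [h3]; exact h4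
        _ ≤ Real.exp (-(r s)/(2*M)) * (r s) ^ (-p) :=
          mul_le_mul hexp_lo hpow_lo (Real.rpow_pos_of_pos (by linarith) _).le
            (Real.exp_pos _).le
    calc C⁻¹ * Real.exp (s/(2*M)) = Real.exp (s/(2*M)) * C⁻¹ := by ring
      _ ≤ Real.exp (s/(2*M)) * (Real.exp (-(r s)/(2*M)) * (r s) ^ (-p)) := by
          exact mul_le_mul_of_nonneg_left hmid hE.le
  · have hmid : Real.exp (-(r s)/(2*M)) * (r s) ^ (-p) ≤ C := by
      calc Real.exp (-(r s)/(2*M)) * (r s) ^ (-p) ≤ 1 * ((2*M) ^ (-p)) :=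
          mul_le_mul hexp_up hpow_up hrpow_pos.le one_pos.le
        _ = (2*M) ^ (-p) := one_mul _
        _ ≤ C := le_max_left _ _
    calc Real.exp (s/(2*M)) * (Real.exp (-(r s)/(2*M)) * (r s) ^ (-p))
        ≤ Real.exp (s/(2*M)) * C := mul_le_mul_of_nonneg_left hmid hE.le
      _ = C * Real.exp (s/(2*M)) := by ring
end

section
/- Let 1 < p < 2 and C, R, N > 0. Any C¹ function F : [0, T) → ℝ satisfying F(0) = Nε > 0 and F'(t) ≥ C F(t)^p / (t+R)^{p-1} for all t ∈ [0, T) cannot exist on all of [0, ∞); moreover there is a constant C₁ > 0 (depending on p, C, R, N but not on ε) such that for all sufficiently small ε > 0, T ≤ C₁ ε^{-(p-1)/(2-p)}. -/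
open Real

theorem stmt_11 (p C R N : ℝ) (hp1 : 1 < p) (hp2 : p < 2)
    (hC : 0 < C) (hR : 0 < R) (hN : 0 < N) :
    ∃ C₁ > 0, ∃ ε₀ > 0, ∀ ε, 0 < ε → ε < ε₀ →
      ∀ (T : ℝ) (F F' : ℝ → ℝ),
        (∀ t ∈ Set.Ico (0:ℝ) T, HasDerivAt F (F' t) t) →
        F 0 = N * ε →
        (∀ t ∈ Set.Ico (0:ℝ) T, 0 < F t) →
        (∀ t ∈ Set.Ico (0:ℝ) T, C * F t ^ p / (t + R) ^ (p - 1) ≤ F' t) →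
        T ≤ C₁ * ε ^ (-(p - 1) / (2 - p)) := by
  have h2p : 0 < 2 - p := by linarith
  have hp1' : 0 < p - 1 := by linarith
  set A : ℝ := (p - 1) * C / (2 - p) with hA
  have hApos : 0 < A := by positivity
  have hNpow : (0:ℝ) < N ^ (1 - p) := rpow_pos_of_pos hN _
  set K : ℝ := N ^ (1 - p) / A with hK
  have hKpos : 0 < K := by positivity
  refine ⟨(2*K) ^ ((2-p)⁻¹), by positivity,
    min 1 ((K / R ^ (2-p)) ^ ((p-1)⁻¹)), by positivity, ?_⟩
  intro ε hε hεlt T F F' hderiv hF0 hFpos hineq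
  set M := (2*K) ^ ((2-p)⁻¹) * ε ^ (-(p - 1) / (2 - p)) with hM
  have hεpow : (0:ℝ) < ε ^ (-(p-1)/(2-p)) := rpow_pos_of_pos hε _
  have hMpos : 0 < M := by positivity
  by_contra hcon
  push_neg at hcon
  set t := (M + T)/2 with ht
  have htmem : t ∈ Set.Ico (0:ℝ) T := ⟨by simp only [ht]; linarith, by simp only [ht]; linarith⟩
  -- the function φ
  set φ : ℝ → ℝ := fun x => F x ^ (1 - p) + A * (x + R) ^ (2 - p) with hφdef
  have hφderiv : ∀ x ∈ Set.Ico (0:ℝ) T,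
      HasDerivAt φ (F' x * (1 - p) * F x ^ (1 - p - 1)
        + A * (1 * ((2 - p) * (x + R) ^ (2 - p - 1)))) x := by
    intro x hx
    have h1 : HasDerivAt (fun y => F y ^ (1 - p)) (F' x * (1 - p) * F x ^ (1 - p - 1)) x :=
      (hderiv x hx).rpow_const (Or.inl (ne_of_gt (hFpos x hx)))
    have h2 : HasDerivAt (fun y : ℝ => (y + R) ^ (2 - p))
        (1 * ((2 - p) * (x + R) ^ (2 - p - 1))) x := by
      have hxR : 0 < x + R := by
        have := hx.1; linarith
      have := ((hasDerivAt_id x).add_const R).rpow_const (p := 2 - p) (Or.inl (ne_of_gt hxR))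
      simpa [mul_comm] using this
    exact h1.add (h2.const_mul A)
  have hDnonpos : ∀ x ∈ Set.Ico (0:ℝ) T,
      F' x * (1 - p) * F x ^ (1 - p - 1)
        + A * (1 * ((2 - p) * (x + R) ^ (2 - p - 1))) ≤ 0 := by
    intro x hx
    have hFx := hFpos x hx
    have hxR : 0 < x + R := by have := hx.1; linarith
    have hiq := hineq x hx
    have hpowpos : (0:ℝ) < F x ^ (1 - p - 1) := rpow_pos_of_pos hFx _
    have hxRpow : (0:ℝ) < (x + R) ^ (2 - p - 1) := rpow_pos_of_pos hxR _
    -- rewrite C * F x ^ p / (x+R)^(p-1) = C * F x ^ p * (x+R)^(1-p)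
    have hdiv : C * F x ^ p / (x + R) ^ (p - 1) = C * F x ^ p * (x + R) ^ (2 - p - 1) := by
      rw [div_eq_mul_inv, ← rpow_neg hxR.le, show -(p-1) = 2-p-1 by ring]
    rw [hdiv] at hiq
    -- F' x * (1-p) * F x ^ (1-p-1) ≤ (1-p) * C * (x+R)^(2-p-1)
    have hmul : F' x * ((1 - p) * F x ^ (1 - p - 1))
        ≤ (C * F x ^ p * (x + R) ^ (2 - p - 1)) * ((1 - p) * F x ^ (1 - p - 1)) := by
      apply mul_le_mul_of_nonpos_right hiq
      have : (1 - p) ≤ 0 := by linarith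
      exact mul_nonpos_of_nonpos_of_nonneg this hpowpos.le
    have hFcancel : F x ^ p * F x ^ (1 - p - 1) = F x ^ (0:ℝ) := by
      rw [← rpow_add hFx]; norm_num
    have hkey : (C * F x ^ p * (x + R) ^ (2 - p - 1)) * ((1 - p) * F x ^ (1 - p - 1))
        = (1 - p) * C * (x + R) ^ (2 - p - 1) := by
      have : F x ^ p * F x ^ (1 - p - 1) = 1 := by
        rw [hFcancel, rpow_zero]
      linear_combination (C * (x + R) ^ (2 - p - 1) * (1 - p)) * this
    have hAterm : A * (1 * ((2 - p) * (x + R) ^ (2 - p - 1)))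
        = (p - 1) * C * (x + R) ^ (2 - p - 1) := by
      field_simp [hA]
      rw [hA, div_mul_cancel₀ _ h2p.ne']
    calc F' x * (1 - p) * F x ^ (1 - p - 1)
          + A * (1 * ((2 - p) * (x + R) ^ (2 - p - 1)))
        = F' x * ((1 - p) * F x ^ (1 - p - 1)) + (p - 1) * C * (x + R) ^ (2 - p - 1) := by
          rw [hAterm]; ring
      _ ≤ (1 - p) * C * (x + R) ^ (2 - p - 1) + (p - 1) * C * (x + R) ^ (2 - p - 1) := by
          rw [hkey] at hmul; linarith
      _ = 0 := by ring
  -- φ antitone on [0, t]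
  have hsub : Set.Icc (0:ℝ) t ⊆ Set.Ico (0:ℝ) T := fun x hx => ⟨hx.1, lt_of_le_of_lt hx.2 htmem.2⟩
  have hanti : AntitoneOn φ (Set.Icc (0:ℝ) t) := by
    apply antitoneOn_of_deriv_nonpos (convex_Icc 0 t)
    · intro x hx
      exact (hφderiv x (hsub hx)).continuousAt.continuousWithinAt
    · intro x hx
      rw [interior_Icc] at hx
      have hx' : x ∈ Set.Ico (0:ℝ) T := ⟨hx.1.le, lt_of_lt_of_le hx.2 (le_of_lt htmem.2)⟩
      exact (hφderiv x hx').differentiableAt.differentiableWithinAt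
    · intro x hx
      rw [interior_Icc] at hx
      have hx' : x ∈ Set.Ico (0:ℝ) T := ⟨hx.1.le, lt_of_lt_of_le hx.2 (le_of_lt htmem.2)⟩
      rw [(hφderiv x hx').deriv]
      exact hDnonpos x hx'
  have hφt : φ t ≤ φ 0 :=
    hanti (Set.left_mem_Icc.2 htmem.1) (Set.right_mem_Icc.2 htmem.1) htmem.1
  -- unfold φ values
  have hFt : (0:ℝ) < F t ^ (1 - p) := rpow_pos_of_pos (hFpos t htmem) _
  have h0mem : (0:ℝ) ∈ Set.Ico (0:ℝ) T := ⟨le_refl _, lt_of_le_of_lt htmem.1 htmem.2⟩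
  have hφ0 : φ 0 = (N * ε) ^ (1 - p) + A * R ^ (2 - p) := by
    simp [hφdef, hF0]
  have hmain : A * (t + R) ^ (2 - p) ≤ (N * ε) ^ (1 - p) + A * R ^ (2 - p) := by
    have := hφt
    rw [hφ0] at this
    simp only [hφdef] at this
    linarith
  -- (N ε)^(1-p) = N^(1-p) ε^(1-p)
  have hNe : (N * ε) ^ (1 - p) = N ^ (1 - p) * ε ^ (1 - p) := mul_rpow hN.le hε.le
  have hεp : (0:ℝ) < ε ^ (1 - p) := rpow_pos_of_pos hε _
  -- R^(2-p) ≤ K * ε^(1-p)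
  have hRineq : R ^ (2 - p) ≤ K * ε ^ (1 - p) := by
    have hε1 : ε ≤ (K / R ^ (2-p)) ^ ((p-1)⁻¹) := le_of_lt (lt_of_lt_of_le hεlt (min_le_right _ _))
    have h1 : ε ^ (p - 1) ≤ ((K / R ^ (2-p)) ^ ((p-1)⁻¹)) ^ (p - 1) :=
      rpow_le_rpow hε.le hε1 (by linarith)
    rw [← rpow_mul (by positivity : (0:ℝ) ≤ K / R ^ (2-p)), inv_mul_cancel₀ (ne_of_gt hp1'),
      rpow_one] at h1
    have hRpow : (0:ℝ) < R ^ (2 - p) := rpow_pos_of_pos hR _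
    have h2 : R ^ (2 - p) * ε ^ (p - 1) ≤ K := by
      rw [le_div_iff₀ hRpow] at h1
      nlinarith
    have h3 : ε ^ (1 - p) = (ε ^ (p - 1))⁻¹ := by
      rw [← rpow_neg hε.le, show -(p-1) = 1-p by ring]
    have hεppos : (0:ℝ) < ε ^ (p - 1) := rpow_pos_of_pos hε _
    rw [h3, ← div_eq_mul_inv, le_div_iff₀ hεppos]
    linarith
  -- (t+R)^(2-p) ≤ 2K ε^(1-p)
  have hεN : (N * ε) ^ (1 - p) = A * (K * ε ^ (1 - p)) := by
    rw [hNe, hK]; field_simp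
  have h2K : (t + R) ^ (2 - p) ≤ (2 * K) * ε ^ (1 - p) := by
    have := hmain
    rw [hεN] at this
    have h' : (t + R) ^ (2 - p) ≤ K * ε ^ (1 - p) + R ^ (2 - p) := by
      nlinarith
    nlinarith
  -- conclude t + R ≤ M
  have htR : 0 ≤ t + R := by have := htmem.1; linarith
  have hfin : t + R ≤ M := by
    have h1 : ((t + R) ^ (2 - p)) ^ ((2-p)⁻¹) ≤ ((2 * K) * ε ^ (1 - p)) ^ ((2-p)⁻¹) :=
      rpow_le_rpow (by positivity) h2K (by positivity)
    rw [← rpow_mul htR, mul_inv_cancel₀ (ne_of_gt h2p), rpow_one] at h1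
    rw [mul_rpow (by positivity) hεp.le, ← rpow_mul hε.le] at h1
    have : (1 - p) * (2 - p)⁻¹ = -(p - 1) / (2 - p) := by
      field_simp
      ring
    rw [this] at h1
    exact h1
  have : t ≤ M := by linarith
  simp only [ht] at this
  linarith
end

section
/- Let C, R, N > 0. Any C¹ function F : [0, T) → ℝ satisfying F(0) = Nε > 0 and F'(t) ≥ C F(t)² / (t+R) for all t ∈ [0, T) satisfies T ≤ R(e^{1/(CNε)} − 1); in particular there exists C₂ > 0 independent of ε such that T ≤ exp(C₂ ε^{-1}) for all sufficiently small ε > 0. -/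
open Real

theorem stmt_12 (C R N : ℝ) (hC : 0 < C) (hR : 0 < R) (hN : 0 < N) :
    (∀ ε > (0:ℝ), ∀ (T : ℝ) (F F' : ℝ → ℝ),
        (∀ t ∈ Set.Ico (0:ℝ) T, HasDerivAt F (F' t) t) →
        F 0 = N * ε →
        (∀ t ∈ Set.Ico (0:ℝ) T, 0 < F t) →
        (∀ t ∈ Set.Ico (0:ℝ) T, C * F t ^ 2 / (t + R) ≤ F' t) →
        T ≤ R * (Real.exp (1 / (C * N * ε)) - 1)) ∧
    ∃ C₂ > 0, ∃ ε₀ > 0, ∀ ε, 0 < ε → ε < ε₀ →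
      ∀ (T : ℝ) (F F' : ℝ → ℝ),
        (∀ t ∈ Set.Ico (0:ℝ) T, HasDerivAt F (F' t) t) →
        F 0 = N * ε →
        (∀ t ∈ Set.Ico (0:ℝ) T, 0 < F t) →
        (∀ t ∈ Set.Ico (0:ℝ) T, C * F t ^ 2 / (t + R) ≤ F' t) →
        T ≤ Real.exp (C₂ / ε) := by
  have main : ∀ ε > (0:ℝ), ∀ (T : ℝ) (F F' : ℝ → ℝ),
      (∀ t ∈ Set.Ico (0:ℝ) T, HasDerivAt F (F' t) t) →
      F 0 = N * ε →
      (∀ t ∈ Set.Ico (0:ℝ) T, 0 < F t) →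
      (∀ t ∈ Set.Ico (0:ℝ) T, C * F t ^ 2 / (t + R) ≤ F' t) →
      T ≤ R * (Real.exp (1 / (C * N * ε)) - 1) := by
    intro ε hε T F F' hder h0 hpos hineq
    have hCNε : 0 < C * N * ε := by positivity
    have hBpos : 0 < R * (Real.exp (1 / (C * N * ε)) - 1) := by
      have h := Real.add_one_le_exp (1 / (C * N * ε))
      have : 0 < 1 / (C * N * ε) := by positivity
      nlinarith
    -- key: every t in [0,T) satisfies t ≤ B
    have key : ∀ t ∈ Set.Ico (0:ℝ) T, t ≤ R * (Real.exp (1 / (C * N * ε)) - 1) := by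
      intro t ht
      obtain ⟨ht0, htT⟩ := ht
      set g : ℝ → ℝ := fun s => (F s)⁻¹ + C * Real.log (s + R) with hg
      have hsub : Set.Icc (0:ℝ) t ⊆ Set.Ico (0:ℝ) T := fun s hs =>
        ⟨hs.1, lt_of_le_of_lt hs.2 htT⟩
      have hgderiv : ∀ s ∈ Set.Ico (0:ℝ) T,
          HasDerivAt g (-(F' s) / (F s) ^ 2 + C * (1 / (s + R))) s := by
        intro s hs
        have hFne : F s ≠ 0 := ne_of_gt (hpos s hs)
        have hsR : s + R ≠ 0 := by have := hs.1; positivity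
        have h1 : HasDerivAt (fun y => (F y)⁻¹) (-(F' s) / (F s) ^ 2) s :=
          (hder s hs).inv hFne
        have h2 : HasDerivAt (fun y : ℝ => y + R) 1 s := (hasDerivAt_id s).add_const R
        have h3 : HasDerivAt (fun y : ℝ => Real.log (y + R)) (1 / (s + R)) s :=
          h2.log hsR
        exact h1.add (h3.const_mul C)
      have hanti : AntitoneOn g (Set.Icc (0:ℝ) t) := by
        apply antitoneOn_of_deriv_nonpos (convex_Icc 0 t)
        · exact fun s hs => ((hgderiv s (hsub hs)).differentiableAt.continuousAt).continuousWithinAt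
        · intro s hs
          rw [interior_Icc] at hs
          have hs' : s ∈ Set.Ico (0:ℝ) T := hsub ⟨le_of_lt hs.1, le_of_lt hs.2⟩
          exact (hgderiv s hs').differentiableAt.differentiableWithinAt
        · intro s hs
          rw [interior_Icc] at hs
          have hs' : s ∈ Set.Ico (0:ℝ) T := hsub ⟨le_of_lt hs.1, le_of_lt hs.2⟩
          rw [(hgderiv s hs').deriv]
          have hF : 0 < F s := hpos s hs'
          have hsR : 0 < s + R := by have := hs'.1; linarith
          have h4 : C * F s ^ 2 / (s + R) ≤ F' s := hineq s hs'
          have h5 : C * (1 / (s + R)) ≤ F' s / F s ^ 2 := by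
            rw [div_le_iff₀ hsR] at h4
            rw [mul_one_div, div_le_div_iff₀ hsR (by positivity : (0:ℝ) < F s ^ 2)]
            nlinarith
          have : C * (1 / (s + R)) = C / (s + R) := by ring
          rw [this] at h5
          have : -(F' s) / F s ^ 2 = -(F' s / F s ^ 2) := by ring
          rw [this]
          linarith [h5, (by ring : C * (1 / (s + R)) = C / (s + R))]
      have hmono : g t ≤ g 0 :=
        hanti (Set.left_mem_Icc.mpr ht0) (Set.right_mem_Icc.mpr ht0) ht0
      have hFt : 0 < F t := hpos t ⟨ht0, htT⟩
      have hF0 : (F 0)⁻¹ = (N * ε)⁻¹ := by rw [h0]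
      have hgt : C * Real.log (t + R) ≤ g t := by
        have : 0 < (F t)⁻¹ := by positivity
        simp only [hg]; linarith
      have hg0 : g 0 = (N * ε)⁻¹ + C * Real.log R := by
        simp only [hg, hF0, zero_add]
      have hlog : Real.log (t + R) ≤ Real.log R + 1 / (C * N * ε) := by
        have h6 : C * Real.log (t + R) ≤ (N * ε)⁻¹ + C * Real.log R := by
          rw [← hg0]; linarith
        have h7 : Real.log (t + R) ≤ (N * ε)⁻¹ / C + Real.log R := by
          rw [div_add' _ _ _ (ne_of_gt hC), le_div_iff₀ hC]
          ring_nf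
          ring_nf at h6
          linarith
        have heq : (N * ε)⁻¹ / C = 1 / (C * N * ε) := by
          field_simp
        rw [heq] at h7
        linarith
      have hrhs : Real.log R + 1 / (C * N * ε) = Real.log (R * Real.exp (1 / (C * N * ε))) := by
        rw [Real.log_mul (ne_of_gt hR) (ne_of_gt (Real.exp_pos _)), Real.log_exp]
      rw [hrhs] at hlog
      have htR : 0 < t + R := by linarith
      have := (Real.log_le_log_iff htR (by positivity)).mp hlog
      nlinarith
    by_cases hT : T ≤ 0
    · linarith
    · push_neg at hT
      by_contra h
      push_neg at h
      set B := R * (Real.exp (1 / (C * N * ε)) - 1)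
      have ht : (B + T) / 2 ∈ Set.Ico (0:ℝ) T := ⟨by positivity, by linarith⟩
      have := key _ ht
      linarith
  refine ⟨main, 1 / (C * N) + 1, by positivity, 1 / (|Real.log R| + 1), by positivity, ?_⟩
  intro ε hε hε₀ T F F' hder h0 hpos hineq
  have h1 := main ε hε T F F' hder h0 hpos hineq
  have hCN : 0 < C * N := by positivity
  -- R * (exp(1/(CNε)) - 1) ≤ exp((1/(CN)+1)/ε)
  have h2 : R * (Real.exp (1 / (C * N * ε)) - 1) ≤ Real.exp ((1 / (C * N) + 1) / ε) := by
    have hRexp : R * (Real.exp (1 / (C * N * ε)) - 1) ≤ R * Real.exp (1 / (C * N * ε)) := by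
      nlinarith [Real.exp_pos (1 / (C * N * ε)), hR]
    have hRle : R * Real.exp (1 / (C * N * ε)) = Real.exp (Real.log R + 1 / (C * N * ε)) := by
      rw [Real.exp_add, Real.exp_log hR]
    have harg : Real.log R + 1 / (C * N * ε) ≤ (1 / (C * N) + 1) / ε := by
      have e1 : 1 / (C * N * ε) = (1 / (C * N)) / ε := by rw [div_div]
      have e2 : (1 / (C * N) + 1) / ε = (1 / (C * N)) / ε + 1 / ε := by ring
      rw [e1, e2]
      have : Real.log R ≤ 1 / ε := by
        have h3 : Real.log R ≤ |Real.log R| := le_abs_self _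
        have h4 : |Real.log R| + 1 ≤ 1 / ε := by
          rw [le_div_iff₀ hε]
          have h5 := (lt_div_iff₀ (by positivity : (0:ℝ) < |Real.log R| + 1)).mp hε₀
          nlinarith [abs_nonneg (Real.log R)]
        linarith
      linarith
    calc R * (Real.exp (1 / (C * N * ε)) - 1) ≤ R * Real.exp (1 / (C * N * ε)) := hRexp
      _ = Real.exp (Real.log R + 1 / (C * N * ε)) := hRle
      _ ≤ Real.exp ((1 / (C * N) + 1) / ε) := Real.exp_le_exp.mpr harg
  linarith
end
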